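/- Consider the region swap game with n = 4, k = 6, move vectors ρ1 = (1,1,0,0), ρ2 = (1,1,0,0), ρ3 = (1,1,1,1), ρ4 = (0,0,1,1), ρ5 = (0,0,1,1), ρ6 = (1,1,1,1) in (ZMod 2)^4, and winning set W = {v ∈ (ZMod 2)^4 : v_1 + v_2 = 1 and v_3 + v_4 = 1}. Then for every initial state V0 ∈ W, Player C moving second has a winning strategy. -/

import Mathlib

/-- Winning positions for Player C in the region swap game with move vectors
`r : Fin k → Fin n → ZMod 2` and winning set `W`.  The first argument is the number of
turns remaining, `used` is the set of indices already selected, the next argument is the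
current state, and the `Bool` records whether it is Player C's turn to move
(`true` = C to move).  On each turn the player to move selects an unused index `i`
together with a value `ε : ZMod 2`, changing the state by `ε • r i`.  When no turns
remain, Player C has won exactly if the final state lies in `W`. -/
def CWins {k n : ℕ} (r : Fin k → Fin n → ZMod 2) (W : Set (Fin n → ZMod 2)) :
    ℕ → Finset (Fin k) → (Fin n → ZMod 2) → Bool → Prop
  | 0, _, v, _ => v ∈ W
  | m + 1, used, v, true => ∃ i : Fin k, i ∉ used ∧ ∃ ε : ZMod 2,
      CWins r W m (insert i used) (v + ε • r i) false
  | m + 1, used, v, false => ∀ i : Fin k, i ∉ used → ∀ ε : ZMod 2,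
      CWins r W m (insert i used) (v + ε • r i) true

/-- The six region move vectors of the figure-eight knot game board. -/
def fig8Moves : Fin 6 → Fin 4 → ZMod 2 :=
  ![![1, 1, 0, 0], ![1, 1, 0, 0], ![1, 1, 1, 1], ![0, 0, 1, 1], ![0, 0, 1, 1],
    ![1, 1, 1, 1]]

/-- Connected states for the figure-eight board: exactly one of `v 1, v 2` and exactly
one of `v 3, v 4` is on. -/
def fig8W : Set (Fin 4 → ZMod 2) := {v | v 0 + v 1 = 1 ∧ v 2 + v 3 = 1}

/-!
The six moves fall into three pairs with equal move vectors: `ρ₁ = ρ₂`, `ρ₄ = ρ₅`, `ρ₃ = ρ₆`.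
Moving second, C answers every move `(i, ε)` of D by the partner index with `-ε`, which
cancels D's move. After each round the state is back at `V0`, so the final state is
`V0 ∈ W`.
-/

section Pairing

variable {k n : ℕ} {r : Fin k → Fin n → ZMod 2} {W : Set (Fin n → ZMod 2)}

theorem cWins_false_of_pairing (σ : Fin k → Fin k) (hσ : Function.Involutive σ)
    (hfix : ∀ i, σ i ≠ i) (hr : ∀ i, r (σ i) = r i) :
    ∀ (m : ℕ) (used : Finset (Fin k)) (v : Fin n → ZMod 2),
      (∀ i ∈ used, σ i ∈ used) → v ∈ W → CWins r W (2 * m) used v false := by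
  intro m
  induction m with
  | zero => intro used v _ hv; exact hv
  | succ m ih =>
    intro used v hused hv i hi ε
    have hσi : σ i ∉ insert i used := by
      rw [Finset.mem_insert, not_or]
      exact ⟨hfix i, fun h => hi (hσ i ▸ hused _ h)⟩
    refine ⟨σ i, hσi, -ε, ?_⟩
    have hcancel : v + ε • r i + (-ε) • r (σ i) = v := by
      rw [hr, neg_smul, add_neg_cancel_right]
    rw [hcancel]
    refine ih _ v ?_ hv
    intro j hj
    simp only [Finset.mem_insert] at hj ⊢
    rcases hj with rfl | rfl | hj
    · exact Or.inr (Or.inl (hσ i))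
    · exact Or.inl rfl
    · exact Or.inr (Or.inr (hused j hj))

end Pairing

def fig8Partner : Fin 6 → Fin 6 := ![1, 0, 5, 4, 3, 2]

/-- On the figure-eight knot game board, for every connected initial state, Player C
moving second has a winning strategy in the region swap game. -/
theorem stmt_3 : ∀ V0 ∈ fig8W, CWins fig8Moves fig8W 6 ∅ V0 false := fun V0 hV0 =>
  cWins_false_of_pairing (r := fig8Moves) fig8Partner (by unfold Function.Involutive; decide)
    (by decide) (by decide) 3 ∅ V0 (by simp) hV0
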